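/- Every polynomial in the entries of a 2×2×2 array that is invariant under the action of SL₂(ℂ) × SL₂(ℂ) × SL₂(ℂ) is a polynomial in Cayley's hyperdeterminant: if f ∈ P is invariant, then f belongs to the ℂ-subalgebra of P generated by Det (i.e. f ∈ Algebra.adjoin ℂ {Det}). -/

import Mathlib

open MvPolynomial

noncomputable section

abbrev P : Type := MvPolynomial (Fin 2 × Fin 2 × Fin 2) ℂ

/-- The action of a triple of SL₂(ℂ) matrices on the polynomial ring `P`,
as a ℂ-algebra homomorphism determined on variables by
`(A,B,C) · x_{ijk} = ∑ A_{i'i} B_{j'j} C_{k'k} x_{i'j'k'}`. -/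
def act (A B C : Matrix.SpecialLinearGroup (Fin 2) ℂ) : P →ₐ[ℂ] P :=
  MvPolynomial.aeval fun p =>
    ∑ i' : Fin 2, ∑ j' : Fin 2, ∑ k' : Fin 2,
      MvPolynomial.C (A.val i' p.1 * B.val j' p.2.1 * C.val k' p.2.2) *
        MvPolynomial.X (i', j', k')

/-- The variable `x_{ijk}`. -/
def x (i j k : Fin 2) : P := MvPolynomial.X (i, j, k)

/-- Cayley's hyperdeterminant of a 2×2×2 array. -/
def Det : P :=
  x 0 0 0 ^ 2 * x 1 1 1 ^ 2 + x 0 0 1 ^ 2 * x 1 1 0 ^ 2 +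
  x 0 1 0 ^ 2 * x 1 0 1 ^ 2 + x 0 1 1 ^ 2 * x 1 0 0 ^ 2 -
  2 * (x 0 0 0 * x 0 0 1 * x 1 1 0 * x 1 1 1 + x 0 0 0 * x 0 1 0 * x 1 0 1 * x 1 1 1 +
       x 0 0 0 * x 0 1 1 * x 1 0 0 * x 1 1 1 + x 0 0 1 * x 0 1 0 * x 1 0 1 * x 1 1 0 +
       x 0 0 1 * x 0 1 1 * x 1 0 0 * x 1 1 0 + x 0 1 0 * x 0 1 1 * x 1 0 0 * x 1 0 1) +
  4 * (x 0 0 0 * x 0 1 1 * x 1 0 1 * x 1 1 0 + x 0 0 1 * x 0 1 0 * x 1 0 0 * x 1 1 1)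

/-!
Every array with nonzero hyperdeterminant lies in the `SL₂(ℂ)³`-orbit of a point
`s e₀₀₀ + t e₁₁₁` of the GHZ line: the determinant of the pencil `l Z₀ + m Z₁` of its slices is a
binary quadratic form whose discriminant is `Det`, and its two independent zeros split the array
into two rank-one tensors. On the GHZ line `Det = (s t)²`, and invariance under `diag(μ, μ⁻¹)` and
under `(s, t) ↦ (t, -s)` forces an invariant `f` to take the form `Q((s t)²)` there. So `f` and
`Q(Det)` agree wherever `Det ≠ 0`, hence everywhere.
-/

theorem exists_eq_vecMulVec_of_det_eq_zero {K : Type*} [Field K] {M : Matrix (Fin 2) (Fin 2) K}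
    (h : M.det = 0) : ∃ u v : Fin 2 → K, M = Matrix.vecMulVec u v := by
  rw [Matrix.det_fin_two] at h
  by_cases h00 : M 0 0 = 0
  · by_cases h01 : M 0 1 = 0
    · refine ⟨![0, 1], M 1, ?_⟩
      ext i j; fin_cases i <;> fin_cases j <;> simp [Matrix.vecMulVec, h00, h01]
    · have h10 : M 1 0 = 0 := by simpa [h00, h01] using h
      refine ⟨![M 0 1, M 1 1], ![0, 1], ?_⟩
      ext i j; fin_cases i <;> fin_cases j <;> simp [Matrix.vecMulVec, h00, h10]
  · refine ⟨![M 0 0, M 1 0], ![1, M 0 1 / M 0 0], ?_⟩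
    ext i j; fin_cases i <;> fin_cases j <;> simp [Matrix.vecMulVec]
    · field_simp
    · field_simp; linear_combination h

theorem exists_independent_zeros_of_discrim_ne_zero {K : Type*} [Field K] [IsAlgClosed K]
    [NeZero (2 : K)] {a b c : K} (h : discrim a b c ≠ 0) :
    ∃ l₀ m₀ l₁ m₁ : K, a * l₀ ^ 2 + b * l₀ * m₀ + c * m₀ ^ 2 = 0 ∧
      a * l₁ ^ 2 + b * l₁ * m₁ + c * m₁ ^ 2 = 0 ∧ l₀ * m₁ - m₀ * l₁ ≠ 0 := by
  rw [discrim] at h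
  by_cases ha : a = 0
  · have hb : b ≠ 0 := by rintro rfl; simp [ha] at h
    exact ⟨1, 0, c, -b, by simp [ha], by rw [ha]; ring, by simpa using hb⟩
  · obtain ⟨r, hr⟩ := IsAlgClosed.exists_pow_nat_eq (b ^ 2 - 4 * a * c) two_pos
    have hr0 : r ≠ 0 := by rintro rfl; simp [← hr] at h
    refine ⟨-b + r, 2 * a, -b - r, 2 * a, by linear_combination a * hr,
      by linear_combination a * hr, ?_⟩
    have hdet : (-b + r) * (2 * a) - 2 * a * (-b - r) = 2 * 2 * a * r := by ring
    rw [hdet]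
    exact mul_ne_zero (mul_ne_zero (mul_ne_zero two_ne_zero two_ne_zero) ha) hr0

theorem exists_specialLinearGroup_rows {K : Type*} [Field K] {a a' : Fin 2 → K}
    (h : (Matrix.of ![a, a']).det ≠ 0) :
    ∃ A : Matrix.SpecialLinearGroup (Fin 2) K,
      A.val 0 = a ∧ A.val 1 = (Matrix.of ![a, a']).det⁻¹ • a' := by
  refine ⟨⟨Matrix.of ![a, (Matrix.of ![a, a']).det⁻¹ • a'], ?_⟩, rfl, rfl⟩
  simp only [Matrix.det_fin_two, Matrix.of_apply] at h ⊢
  simp only [Matrix.cons_val_zero, Matrix.cons_val_one, Pi.smul_apply, smul_eq_mul] at h ⊢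
  field_simp

open Polynomial in
theorem Polynomial.coeff_comp_neg_X {R : Type*} [CommRing R] (p : R[X]) (n : ℕ) :
    (p.comp (-X)).coeff n = (-1) ^ n * p.coeff n := by
  induction p using Polynomial.induction_on' with
  | add p q hp hq => simp only [add_comp, coeff_add, hp, hq, mul_add]
  | monomial k a =>
    rw [monomial_comp, neg_pow, ← C_1, ← C_neg, ← C_pow, mul_left_comm, ← mul_assoc, ← C_mul,
      coeff_C_mul_X_pow, coeff_monomial]
    obtain rfl | h := eq_or_ne n k <;> simp [*, mul_comm, Ne.symm]

open Polynomial in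
theorem Polynomial.expand_contract_two_of_comp_neg_X_eq {R : Type*} [CommRing R]
    [NoZeroDivisors R] [NeZero (2 : R)] {p : R[X]} (h : p.comp (-X) = p) :
    expand R 2 (contract 2 p) = p := by
  ext n
  rw [coeff_expand two_pos, coeff_contract two_ne_zero]
  split_ifs with hn
  · rw [Nat.div_mul_cancel hn]
  · have hodd : Odd n := Nat.odd_iff.mpr (by omega)
    have hcoeff := coeff_comp_neg_X p n
    rw [h, hodd.neg_one_pow] at hcoeff
    have h2 : (2 : R) * p.coeff n = 0 := by linear_combination hcoeff
    exact ((mul_eq_zero.mp h2).resolve_left two_ne_zero).symm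

theorem MvPolynomial.eq_of_eval_eq_of_eval_ne_zero {σ R : Type*} [CommRing R] [IsDomain R]
    [Infinite R] {p f g : MvPolynomial σ R} (hp : p ≠ 0)
    (h : ∀ x, eval x p ≠ 0 → eval x f = eval x g) : f = g := by
  have hpfg : p * (f - g) = 0 := MvPolynomial.funext fun x => by
    by_cases hx : eval x p = 0
    · simp [hx]
    · simp [h x hx]
  exact sub_eq_zero.mp ((mul_eq_zero.mp hpfg).resolve_left hp)

def actArray (A B C : Matrix.SpecialLinearGroup (Fin 2) ℂ) (z : Fin 2 × Fin 2 × Fin 2 → ℂ) :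
    Fin 2 × Fin 2 × Fin 2 → ℂ := fun p =>
  ∑ i' : Fin 2, ∑ j' : Fin 2, ∑ k' : Fin 2,
    A.val i' p.1 * B.val j' p.2.1 * C.val k' p.2.2 * z (i', j', k')

theorem eval_act (A B C : Matrix.SpecialLinearGroup (Fin 2) ℂ) (z : Fin 2 × Fin 2 × Fin 2 → ℂ)
    (g : P) : eval z (act A B C g) = eval (actArray A B C z) g := by
  have h : (aeval z).comp (act A B C) = aeval (actArray A B C z) := by
    rw [act, comp_aeval]
    congr 1
    funext p
    simp [actArray]
  rw [← aeval_eq_eval, ← aeval_eq_eval, ← h, AlgHom.comp_apply]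

def pureTensor (a b c : Fin 2 → ℂ) : Fin 2 × Fin 2 × Fin 2 → ℂ :=
  fun p => a p.1 * b p.2.1 * c p.2.2

def ghz {R : Type*} [Zero R] (s t : R) : Fin 2 × Fin 2 × Fin 2 → R := fun p =>
  if p = (0, 0, 0) then s else if p = (1, 1, 1) then t else 0

theorem actArray_ghz (A B C : Matrix.SpecialLinearGroup (Fin 2) ℂ) (s t : ℂ) :
    actArray A B C (ghz s t) =
      s • pureTensor (A.val 0) (B.val 0) (C.val 0) +
        t • pureTensor (A.val 1) (B.val 1) (C.val 1) := by
  funext p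
  simp [actArray, ghz, pureTensor, Fin.sum_univ_two]
  ring

theorem eval_Det_smul_pureTensor_add (s t : ℂ) (a b c a' b' c' : Fin 2 → ℂ) :
    eval (s • pureTensor a b c + t • pureTensor a' b' c') Det =
      (s * t * (Matrix.of ![a, a']).det * (Matrix.of ![b, b']).det *
        (Matrix.of ![c, c']).det) ^ 2 := by
  simp [Det, x, pureTensor, Matrix.det_fin_two]
  ring

theorem eval_Det_actArray_ghz (A B C : Matrix.SpecialLinearGroup (Fin 2) ℂ) (s t : ℂ) :
    eval (actArray A B C (ghz s t)) Det = (s * t) ^ 2 := by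
  have hrows (M : Matrix.SpecialLinearGroup (Fin 2) ℂ) :
      (Matrix.of ![M.val 0, M.val 1]).det = 1 := by
    have hM := M.det_coe
    rw [Matrix.det_fin_two] at hM
    simpa [Matrix.det_fin_two] using hM
  rw [actArray_ghz, eval_Det_smul_pureTensor_add, hrows, hrows, hrows]
  ring

def pencil (z : Fin 2 × Fin 2 × Fin 2 → ℂ) (l m : ℂ) : Matrix (Fin 2) (Fin 2) ℂ :=
  Matrix.of fun i j => l * z (i, j, 0) + m * z (i, j, 1)

theorem exists_eq_pureTensor_add_pureTensor {z : Fin 2 × Fin 2 × Fin 2 → ℂ}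
    (hz : eval z Det ≠ 0) :
    ∃ a b c a' b' c' : Fin 2 → ℂ, z = pureTensor a b c + pureTensor a' b' c' := by
  set β := z (0, 0, 0) * z (1, 1, 1) + z (1, 1, 0) * z (0, 0, 1) -
    z (0, 1, 0) * z (1, 0, 1) - z (1, 0, 0) * z (0, 1, 1)
  have hdet (l m : ℂ) : (pencil z l m).det =
      (pencil z 1 0).det * l ^ 2 + β * l * m + (pencil z 0 1).det * m ^ 2 := by
    simp [β, pencil, Matrix.det_fin_two]; ring
  have hdisc : discrim (pencil z 1 0).det β (pencil z 0 1).det = eval z Det := by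
    simp [β, discrim, pencil, Matrix.det_fin_two, Det, x]; ring
  obtain ⟨l₀, m₀, l₁, m₁, h₀, h₁, he⟩ := exists_independent_zeros_of_discrim_ne_zero (hdisc ▸ hz)
  obtain ⟨u, v, huv⟩ := exists_eq_vecMulVec_of_det_eq_zero ((hdet l₀ m₀).trans h₀)
  obtain ⟨u', v', huv'⟩ := exists_eq_vecMulVec_of_det_eq_zero ((hdet l₁ m₁).trans h₁)
  refine ⟨u, v, (l₀ * m₁ - m₀ * l₁)⁻¹ • ![m₁, -l₁],
    u', v', (l₀ * m₁ - m₀ * l₁)⁻¹ • ![-m₀, l₀], ?_⟩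
  funext ⟨i, j, k⟩
  have h0 := congrFun (congrFun huv i) j
  have h1 := congrFun (congrFun huv' i) j
  simp only [pencil, Matrix.of_apply, Matrix.vecMulVec_apply] at h0 h1
  fin_cases k <;> simp [pureTensor] <;> field_simp
  · linear_combination m₁ * h0 - m₀ * h1
  · linear_combination l₀ * h1 - l₁ * h0

theorem exists_eq_actArray_ghz {z : Fin 2 × Fin 2 × Fin 2 → ℂ} (hz : eval z Det ≠ 0) :
    ∃ (s t : ℂ) (A B C : Matrix.SpecialLinearGroup (Fin 2) ℂ), z = actArray A B C (ghz s t) := by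
  obtain ⟨a, b, c, a', b', c', rfl⟩ := exists_eq_pureTensor_add_pureTensor hz
  have hdet := hz
  rw [← one_smul ℂ (pureTensor a b c), ← one_smul ℂ (pureTensor a' b' c'),
    eval_Det_smul_pureTensor_add] at hdet
  simp only [one_mul, ne_eq, pow_eq_zero_iff two_ne_zero, mul_eq_zero, not_or] at hdet
  obtain ⟨⟨ha, hb⟩, hc⟩ := hdet
  obtain ⟨A, hA₀, hA₁⟩ := exists_specialLinearGroup_rows ha
  obtain ⟨B, hB₀, hB₁⟩ := exists_specialLinearGroup_rows hb
  obtain ⟨C, hC₀, hC₁⟩ := exists_specialLinearGroup_rows hc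
  refine ⟨1, (Matrix.of ![a, a']).det * (Matrix.of ![b, b']).det * (Matrix.of ![c, c']).det,
    A, B, C, ?_⟩
  rw [actArray_ghz, hA₀, hA₁, hB₀, hB₁, hC₀, hC₁]
  funext p
  simp [pureTensor]
  field_simp

def IsSLInvariant (f : P) : Prop :=
  ∀ A B C : Matrix.SpecialLinearGroup (Fin 2) ℂ, act A B C f = f

def ghzLine (f : P) : Polynomial ℂ := aeval (ghz Polynomial.X 1) f

theorem eval_ghzLine (f : P) (u : ℂ) : (ghzLine f).eval u = eval (ghz u 1) f := by
  rw [ghzLine, ← Polynomial.coe_aeval_eq_eval, comp_aeval_apply, ← aeval_eq_eval]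
  congr 2
  funext p
  simp only [ghz]
  split_ifs <;> simp

namespace IsSLInvariant

variable {f : P}

theorem eval_actArray (hf : IsSLInvariant f) (A B C : Matrix.SpecialLinearGroup (Fin 2) ℂ)
    (z : Fin 2 × Fin 2 × Fin 2 → ℂ) : eval (actArray A B C z) f = eval z f := by
  rw [← eval_act, hf]

theorem eval_ghz_mul (hf : IsSLInvariant f) {μ : ℂ} (hμ : μ ≠ 0) (s t : ℂ) :
    eval (ghz (μ * s) (μ⁻¹ * t)) f = eval (ghz s t) f := by
  let D : Matrix.SpecialLinearGroup (Fin 2) ℂ := ⟨!![μ, 0; 0, μ⁻¹], by simp [hμ]⟩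
  rw [← hf.eval_actArray D 1 1 (ghz s t), actArray_ghz]
  congr 2
  funext ⟨i, j, k⟩
  fin_cases i <;> fin_cases j <;> fin_cases k <;> simp [D, ghz, pureTensor, mul_comm]

theorem eval_ghz_swap (hf : IsSLInvariant f) (s t : ℂ) :
    eval (ghz t (-s)) f = eval (ghz s t) f := by
  let J : Matrix.SpecialLinearGroup (Fin 2) ℂ := ⟨!![0, -1; 1, 0], by simp⟩
  rw [← hf.eval_actArray J J J (ghz s t), actArray_ghz]
  congr 2
  funext ⟨i, j, k⟩
  fin_cases i <;> fin_cases j <;> fin_cases k <;> simp [J, ghz, pureTensor]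

theorem ghzLine_comp_neg_X (hf : IsSLInvariant f) :
    (ghzLine f).comp (-Polynomial.X) = ghzLine f := by
  refine Polynomial.eq_of_infinite_eval_eq _ _ ((Set.finite_singleton 0).infinite_compl.mono ?_)
  intro u (hu : u ≠ 0)
  have hneg := hf.eval_ghz_mul (neg_ne_zero.mpr one_ne_zero) u (-1)
  have hscale := hf.eval_ghz_mul hu 1 u
  simp only [neg_one_mul, inv_neg, inv_one, neg_neg] at hneg
  simp only [mul_one, inv_mul_cancel₀ hu] at hscale
  simp only [Set.mem_ofPred_eq, Polynomial.eval_comp, Polynomial.eval_neg, Polynomial.eval_X,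
    eval_ghzLine]
  rw [hneg, hf.eval_ghz_swap 1 u, hscale]

theorem eval_ghz (hf : IsSLInvariant f) (s : ℂ) {t : ℂ} (ht : t ≠ 0) :
    eval (ghz s t) f = (Polynomial.contract 2 (ghzLine f)).eval ((s * t) ^ 2) := by
  rw [← Polynomial.expand_eval,
    Polynomial.expand_contract_two_of_comp_neg_X_eq hf.ghzLine_comp_neg_X, eval_ghzLine,
    ← hf.eval_ghz_mul ht s t, inv_mul_cancel₀ ht, mul_comm]

end IsSLInvariant

theorem Det_ne_zero : Det ≠ 0 := fun h => by
  simpa [Det, x, ghz] using congrArg (eval (ghz 1 1)) h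

/-- Every invariant polynomial is a polynomial in Cayley's hyperdeterminant. -/
theorem invariants_generated_by_hyperdeterminant (f : P)
    (hinv : ∀ A B C : Matrix.SpecialLinearGroup (Fin 2) ℂ, act A B C f = f) :
    f ∈ Algebra.adjoin ℂ ({Det} : Set P) := by
  have hf : IsSLInvariant f := hinv
  set Q := Polynomial.contract 2 (ghzLine f)
  suffices f = Polynomial.aeval Det Q from this ▸ Polynomial.aeval_mem_adjoin_singleton ℂ Det
  refine eq_of_eval_eq_of_eval_ne_zero Det_ne_zero fun z hz => ?_
  obtain ⟨s, t, A, B, C, rfl⟩ := exists_eq_actArray_ghz hz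
  have ht : t ≠ 0 := by rintro rfl; simp [eval_Det_actArray_ghz] at hz
  rw [hf.eval_actArray, hf.eval_ghz s ht, ← Polynomial.coe_aeval_eq_eval, ← aeval_eq_eval,
    ← Polynomial.aeval_algHom_apply, aeval_eq_eval, eval_Det_actArray_ghz]
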